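/- Let M = (E, ρ) be a matroid and let Y ⊆ E. Then the collection of cyclic flats of the restriction M|Y satisfies Z(M|Y) = { cyc(Z ∩ Y) : Z ∈ Z(M) }. -/

import Mathlib

open Finset

structure FinMatroid (α : Type*) [DecidableEq α] where
  E : Finset α
  rk : Finset α → ℕ
  rk_le_card : ∀ A, A ⊆ E → rk A ≤ A.card
  rk_mono : ∀ A B, A ⊆ B → B ⊆ E → rk A ≤ rk B
  rk_submod : ∀ A B, A ⊆ E → B ⊆ E → rk (A ∪ B) + rk (A ∩ B) ≤ rk A + rk B

namespace FinMatroid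

variable {α : Type*} [DecidableEq α]

/-- The closure operator `cl(A) = {e ∈ E : ρ(A ∪ {e}) = ρ(A)}`. -/
def cl (M : FinMatroid α) (A : Finset α) : Finset α :=
  M.E.filter fun e => M.rk (insert e A) = M.rk A

/-- The cyclic operator `cyc(A) = {e ∈ A : ρ(A − {e}) = ρ(A)}`. -/
def cyc (M : FinMatroid α) (A : Finset α) : Finset α :=
  A.filter fun e => M.rk (A.erase e) = M.rk A

/-- A flat is a set fixed by the closure operator. -/
def IsFlat (M : FinMatroid α) (F : Finset α) : Prop :=
  F ⊆ M.E ∧ M.cl F = F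

/-- A cyclic set is a set fixed by the cyclic operator. -/
def IsCyclic (M : FinMatroid α) (U : Finset α) : Prop :=
  U ⊆ M.E ∧ M.cyc U = U

/-- A cyclic flat is a set fixed by both the closure and the cyclic operators. -/
def IsCyclicFlat (M : FinMatroid α) (Z : Finset α) : Prop :=
  Z ⊆ M.E ∧ M.cl Z = Z ∧ M.cyc Z = Z

/-- The minor `M|Y/X`: restriction to `Y` followed by contraction of `X`. -/
def minor (M : FinMatroid α) (X Y : Finset α) (hXY : X ⊆ Y) (hY : Y ⊆ M.E) :
    FinMatroid α where
  E := Y \ X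
  rk A := M.rk (A ∪ X) - M.rk X
  rk_le_card := by
    intro A hA
    have hAE : A ⊆ M.E := fun a ha => hY (mem_sdiff.mp (hA ha)).1
    have hXE : X ⊆ M.E := hXY.trans hY
    have h1 := M.rk_submod A X hAE hXE
    have h2 := M.rk_le_card A hAE
    show M.rk (A ∪ X) - M.rk X ≤ A.card
    omega
  rk_mono := by
    intro A B hAB hB
    have hBE : B ⊆ M.E := fun a ha => hY (mem_sdiff.mp (hB ha)).1
    have hBX : B ∪ X ⊆ M.E := union_subset hBE (hXY.trans hY)
    have := M.rk_mono (A ∪ X) (B ∪ X) (union_subset_union hAB Subset.rfl) hBX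
    show M.rk (A ∪ X) - M.rk X ≤ M.rk (B ∪ X) - M.rk X
    omega
  rk_submod := by
    intro A B hA hB
    have hAE : A ⊆ M.E := fun a ha => hY (mem_sdiff.mp (hA ha)).1
    have hBE : B ⊆ M.E := fun a ha => hY (mem_sdiff.mp (hB ha)).1
    have hXE : X ⊆ M.E := hXY.trans hY
    have hAX : A ∪ X ⊆ M.E := union_subset hAE hXE
    have hBX : B ∪ X ⊆ M.E := union_subset hBE hXE
    have hsub := M.rk_submod (A ∪ X) (B ∪ X) hAX hBX
    have e1 : (A ∪ X) ∪ (B ∪ X) = (A ∪ B) ∪ X := by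
      ext x; simp only [mem_union]; tauto
    have e2 : (A ∪ X) ∩ (B ∪ X) = (A ∩ B) ∪ X := by
      ext x; simp only [mem_union, mem_inter]; tauto
    rw [e1, e2] at hsub
    have h1 : M.rk X ≤ M.rk (A ∪ X) := M.rk_mono X _ subset_union_right hAX
    have h2 : M.rk X ≤ M.rk (B ∪ X) := M.rk_mono X _ subset_union_right hBX
    have hIX : (A ∩ B) ∪ X ⊆ M.E := union_subset (inter_subset_left.trans hAE) hXE
    have hUX : (A ∪ B) ∪ X ⊆ M.E := union_subset (union_subset hAE hBE) hXE
    have h3 : M.rk X ≤ M.rk ((A ∩ B) ∪ X) := M.rk_mono X _ subset_union_right hIX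
    have h4 : M.rk X ≤ M.rk ((A ∪ B) ∪ X) := M.rk_mono X _ subset_union_right hUX
    show M.rk ((A ∪ B) ∪ X) - M.rk X + (M.rk ((A ∩ B) ∪ X) - M.rk X) ≤
      (M.rk (A ∪ X) - M.rk X) + (M.rk (B ∪ X) - M.rk X)
    omega

/-- The restriction `M|Y`. -/
def restrict (M : FinMatroid α) (Y : Finset α) (hY : Y ⊆ M.E) : FinMatroid α where
  E := Y
  rk := M.rk
  rk_le_card := fun A hA => M.rk_le_card A (hA.trans hY)
  rk_mono := fun A B hAB hB => M.rk_mono A B hAB (hB.trans hY)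
  rk_submod := fun A B hA hB => M.rk_submod A B (hA.trans hY) (hB.trans hY)

/-- `M` is binary: it is the matroid of linear dependence of a family of
vectors over the field with two elements. -/
def IsBinary (M : FinMatroid α) : Prop :=
  ∃ (m : ℕ) (φ : α → (Fin m → ZMod 2)),
    ∀ A : Finset α, A ⊆ M.E →
      M.rk A = Module.finrank (ZMod 2) (Submodule.span (ZMod 2) (φ '' (A : Set α)))

def Simple (M : FinMatroid α) : Prop :=
  (∀ e ∈ M.E, M.rk {e} = 1) ∧
    ∀ e ∈ M.E, ∀ f ∈ M.E, e ≠ f → M.rk ({e, f} : Finset α) = 2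

def NoIsthmus (M : FinMatroid α) : Prop :=
  ∀ e ∈ M.E, M.rk (M.E.erase e) = M.rk M.E

def IsMinDist (M : FinMatroid α) (d : ℕ) : Prop :=
  (∃ X ⊆ M.E, M.rk (M.E \ X) < M.rk M.E ∧ X.card = d) ∧
    ∀ X ⊆ M.E, M.rk (M.E \ X) < M.rk M.E → d ≤ X.card

def IsAtomCF (M : FinMatroid α) (Z : Finset α) : Prop :=
  M.IsCyclicFlat Z ∧ Z ≠ ∅ ∧ ¬ ∃ Z', M.IsCyclicFlat Z' ∧ ∅ ⊂ Z' ∧ Z' ⊂ Z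

def IsCoatomCF (M : FinMatroid α) (Z : Finset α) : Prop :=
  M.IsCyclicFlat Z ∧ Z ⊂ M.E ∧ ¬ ∃ Z', M.IsCyclicFlat Z' ∧ Z ⊂ Z' ∧ Z' ⊂ M.E

def IsCircuit (M : FinMatroid α) (C : Finset α) : Prop :=
  C ⊆ M.E ∧ M.rk C < C.card ∧ ∀ D ⊂ C, M.rk D = D.card

end FinMatroid



/-!
If `W` is a cyclic flat of `M|Y`, then `cl W` is a cyclic flat of `M` (the closure of a cyclic
set is cyclic) and `W = cyc (cl W ∩ Y)`. Conversely, let `Z` be a flat of `M` and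
`W = cyc (Z ∩ Y)`. An element `e ∈ Y` spanned by `W` lies in `cl W ⊆ Z`; if `e ∉ W`, then
`W ⊆ (Z ∩ Y) - e` spans `e`, which says precisely that `e ∈ cyc (Z ∩ Y) = W`. So `W` is closed in
`M|Y`, and it is cyclic because `cyc` is idempotent: deleting a coloop `f` of `A` does not change
`cyc A`, since `f` stays a coloop of every `A - e`.
-/

open Finset

namespace FinMatroid

variable {α : Type*} [DecidableEq α] (M : FinMatroid α) {A B : Finset α} {e : α}

lemma mem_cl_iff : e ∈ M.cl A ↔ e ∈ M.E ∧ M.rk (insert e A) = M.rk A := mem_filter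

lemma mem_cyc_iff : e ∈ M.cyc A ↔ e ∈ A ∧ M.rk (A.erase e) = M.rk A := mem_filter

lemma cl_subset_ground (A : Finset α) : M.cl A ⊆ M.E := filter_subset _ _

lemma cyc_subset (A : Finset α) : M.cyc A ⊆ A := filter_subset _ _

lemma subset_cl (hA : A ⊆ M.E) : A ⊆ M.cl A := fun e he => by
  rw [mem_cl_iff, insert_eq_self.mpr he]
  exact ⟨hA he, rfl⟩

lemma rk_insert_le (hA : A ⊆ M.E) (he : e ∈ M.E) : M.rk (insert e A) ≤ M.rk A + 1 := by
  have hsub := M.rk_submod {e} A (singleton_subset_iff.mpr he) hA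
  have hcard := M.rk_le_card {e} (singleton_subset_iff.mpr he)
  rw [card_singleton] at hcard
  rw [← insert_eq] at hsub
  omega

lemma rk_le_rk_erase_add_one (hA : A ⊆ M.E) (e : α) : M.rk A ≤ M.rk (A.erase e) + 1 := by
  by_cases he : e ∈ A
  · simpa only [insert_erase he] using M.rk_insert_le ((erase_subset e A).trans hA) (hA he)
  · rw [erase_eq_of_notMem he]
    omega

lemma rk_erase_le (hA : A ⊆ M.E) (e : α) : M.rk (A.erase e) ≤ M.rk A :=
  M.rk_mono _ _ (erase_subset e A) hA

lemma rk_insert_eq_of_subset (hAB : A ⊆ B) (hB : B ⊆ M.E) (he : e ∈ M.E)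
    (hAe : M.rk (insert e A) = M.rk A) : M.rk (insert e B) = M.rk B := by
  have hsub := M.rk_submod (insert e A) B (insert_subset he (hAB.trans hB)) hB
  have hunion : insert e A ∪ B = insert e B := by
    rw [insert_union, union_eq_right.mpr hAB]
  have hinter : M.rk A ≤ M.rk (insert e A ∩ B) :=
    M.rk_mono _ _ (subset_inter (subset_insert e A) hAB) (inter_subset_right.trans hB)
  have hmono : M.rk B ≤ M.rk (insert e B) := M.rk_mono _ _ (subset_insert e B) (insert_subset he hB)
  rw [hunion] at hsub
  omega

lemma cl_mono (hAB : A ⊆ B) (hB : B ⊆ M.E) : M.cl A ⊆ M.cl B := fun _ he => by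
  obtain ⟨heE, hAe⟩ := M.mem_cl_iff.mp he
  exact M.mem_cl_iff.mpr ⟨heE, M.rk_insert_eq_of_subset hAB hB heE hAe⟩

lemma rk_union_eq_of_subset_cl (hA : A ⊆ M.E) (hB : B ⊆ M.cl A) : M.rk (A ∪ B) = M.rk A := by
  induction B using Finset.induction_on with
  | empty => rw [union_empty]
  | insert a B _ ih =>
    obtain ⟨haE, haA⟩ := M.mem_cl_iff.mp (hB (mem_insert_self a B))
    have hB' : B ⊆ M.cl A := (subset_insert a B).trans hB
    have hAB : A ∪ B ⊆ M.E := union_subset hA (hB'.trans (M.cl_subset_ground A))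
    rw [union_insert, M.rk_insert_eq_of_subset subset_union_left hAB haE haA, ih hB']

lemma rk_cl (hA : A ⊆ M.E) : M.rk (M.cl A) = M.rk A := by
  simpa only [union_eq_right.mpr (M.subset_cl hA)] using M.rk_union_eq_of_subset_cl hA subset_rfl

lemma cl_cl (hA : A ⊆ M.E) : M.cl (M.cl A) = M.cl A := by
  refine Subset.antisymm (fun e he => ?_) (M.subset_cl (M.cl_subset_ground A))
  obtain ⟨heE, hcle⟩ := M.mem_cl_iff.mp he
  refine M.mem_cl_iff.mpr ⟨heE, ?_⟩
  have h₁ : M.rk (insert e A) ≤ M.rk (insert e (M.cl A)) :=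
    M.rk_mono _ _ (insert_subset_insert e (M.subset_cl hA))
      (insert_subset heE (M.cl_subset_ground A))
  have h₂ : M.rk A ≤ M.rk (insert e A) := M.rk_mono _ _ (subset_insert e A) (insert_subset heE hA)
  rw [M.rk_cl hA] at hcle
  omega

lemma mem_cyc_of_mem_cl_erase (he : e ∈ A) (hcl : e ∈ M.cl (A.erase e)) : e ∈ M.cyc A := by
  obtain ⟨-, hrk⟩ := M.mem_cl_iff.mp hcl
  rw [insert_erase he] at hrk
  exact M.mem_cyc_iff.mpr ⟨he, hrk.symm⟩

lemma cl_cyc_inter_self (hA : A ⊆ M.E) : M.cl (M.cyc A) ∩ A = M.cyc A := by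
  refine Subset.antisymm (fun e he => ?_)
    (subset_inter (M.subset_cl ((M.cyc_subset A).trans hA)) (M.cyc_subset A))
  obtain ⟨hcl, heA⟩ := mem_inter.mp he
  by_contra hcyc
  have hsub : M.cyc A ⊆ A.erase e := subset_erase.mpr ⟨M.cyc_subset A, hcyc⟩
  exact hcyc (M.mem_cyc_of_mem_cl_erase heA (M.cl_mono hsub ((erase_subset e A).trans hA) hcl))

lemma rk_erase_add_one_of_subset {f : α} (hA : A ⊆ M.E) (hBA : B ⊆ A) (hf : f ∈ B)
    (hcoloop : M.rk (A.erase f) + 1 = M.rk A) : M.rk (B.erase f) + 1 = M.rk B := by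
  have hsub := M.rk_submod (A.erase f) B ((erase_subset f A).trans hA) (hBA.trans hA)
  rw [erase_union_of_mem hf, union_eq_left.mpr hBA, erase_inter, inter_eq_right.mpr hBA] at hsub
  have := M.rk_le_rk_erase_add_one (hBA.trans hA) f
  omega

lemma cyc_erase_of_coloop {f : α} (hA : A ⊆ M.E) (hfA : f ∈ A)
    (hcoloop : M.rk (A.erase f) + 1 = M.rk A) : M.cyc (A.erase f) = M.cyc A := by
  ext e
  rw [mem_cyc_iff, mem_cyc_iff]
  by_cases hef : e = f
  · subst hef
    simp only [notMem_erase, false_and, false_iff, not_and]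
    omega
  by_cases heA : e ∈ A
  · have heA' : e ∈ A.erase f := mem_erase.mpr ⟨hef, heA⟩
    have hcoloop' := M.rk_erase_add_one_of_subset hA (erase_subset e A)
      (mem_erase.mpr ⟨Ne.symm hef, hfA⟩) hcoloop
    rw [erase_right_comm] at hcoloop'
    simp only [heA, heA', true_and]
    omega
  · simp [heA]

lemma cyc_cyc (hA : A ⊆ M.E) : M.cyc (M.cyc A) = M.cyc A := by
  induction A using Finset.strongInduction with
  | H A ih =>
    by_cases hfix : M.cyc A = A
    · rw [hfix, hfix]
    obtain ⟨f, hfA, hfcyc⟩ := exists_of_ssubset (ssubset_of_subset_of_ne (M.cyc_subset A) hfix)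
    have hcoloop : M.rk (A.erase f) + 1 = M.rk A := by
      have hne : M.rk (A.erase f) ≠ M.rk A := fun h => hfcyc (M.mem_cyc_iff.mpr ⟨hfA, h⟩)
      have := M.rk_erase_le hA f
      have := M.rk_le_rk_erase_add_one hA f
      omega
    rw [← M.cyc_erase_of_coloop hA hfA hcoloop]
    exact ih _ (erase_ssubset hfA) ((erase_subset f A).trans hA)

lemma isCyclicFlat_restrict_iff {Y W : Finset α} (hY : Y ⊆ M.E) :
    (M.restrict Y hY).IsCyclicFlat W ↔ W ⊆ Y ∧ M.cl W ∩ Y = W ∧ M.cyc W = W := by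
  have hcl : (M.restrict Y hY).cl W = M.cl W ∩ Y := by
    ext e
    simp only [cl, mem_filter, mem_inter]
    exact ⟨fun ⟨heY, h⟩ => ⟨⟨hY heY, h⟩, heY⟩, fun ⟨⟨_, h⟩, heY⟩ => ⟨heY, h⟩⟩
  rw [IsCyclicFlat, hcl]
  rfl

variable {M}

lemma IsCyclicFlat.isFlat {Z : Finset α} (hZ : M.IsCyclicFlat Z) : M.IsFlat Z :=
  ⟨hZ.1, hZ.2.1⟩

lemma IsCyclic.isCyclicFlat_cl {W : Finset α} (hW : M.IsCyclic W) : M.IsCyclicFlat (M.cl W) := by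
  obtain ⟨hWE, hWcyc⟩ := hW
  refine ⟨M.cl_subset_ground W, M.cl_cl hWE, Subset.antisymm (M.cyc_subset _) fun e he => ?_⟩
  have hclE := M.cl_subset_ground W
  have hWe : M.rk (W.erase e) = M.rk W := by
    by_cases heW : e ∈ W
    · exact (M.mem_cyc_iff.mp (hWcyc.symm ▸ heW)).2
    · rw [erase_eq_of_notMem heW]
  have hle : M.rk (W.erase e) ≤ M.rk ((M.cl W).erase e) :=
    M.rk_mono _ _ (erase_subset_erase e (M.subset_cl hWE)) ((erase_subset e _).trans hclE)
  have := M.rk_erase_le hclE e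
  have := M.rk_cl hWE
  exact M.mem_cyc_iff.mpr ⟨he, by omega⟩

lemma IsFlat.isCyclicFlat_restrict_cyc_inter {Y Z : Finset α} (hZ : M.IsFlat Z) (hY : Y ⊆ M.E) :
    (M.restrict Y hY).IsCyclicFlat (M.cyc (Z ∩ Y)) := by
  obtain ⟨hZE, hZcl⟩ := hZ
  have hZYE : Z ∩ Y ⊆ M.E := inter_subset_left.trans hZE
  have hWZY : M.cyc (Z ∩ Y) ⊆ Z ∩ Y := M.cyc_subset _
  have hclZ : M.cl (M.cyc (Z ∩ Y)) ⊆ Z :=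
    (M.cl_mono (hWZY.trans inter_subset_left) hZE).trans hZcl.le
  refine (M.isCyclicFlat_restrict_iff hY).mpr
    ⟨hWZY.trans inter_subset_right, ?_, M.cyc_cyc hZYE⟩
  calc M.cl (M.cyc (Z ∩ Y)) ∩ Y = M.cl (M.cyc (Z ∩ Y)) ∩ (Z ∩ Y) := by
        rw [← inter_assoc, inter_eq_left.mpr hclZ]
    _ = M.cyc (Z ∩ Y) := M.cl_cyc_inter_self hZYE

end FinMatroid

/-- `Z(M|Y) = { cyc(Z ∩ Y) : Z ∈ Z(M) }`. -/
theorem cyclicFlats_restrict {α : Type*} [DecidableEq α] (M : FinMatroid α)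
    (Y : Finset α) (hY : Y ⊆ M.E) :
    {Z : Finset α | (M.restrict Y hY).IsCyclicFlat Z} =
      {W : Finset α | ∃ Z, M.IsCyclicFlat Z ∧ W = M.cyc (Z ∩ Y)} := by
  ext W
  constructor
  · intro hW
    obtain ⟨hWY, hclW, hcycW⟩ := (M.isCyclicFlat_restrict_iff hY).mp hW
    refine ⟨M.cl W, FinMatroid.IsCyclic.isCyclicFlat_cl ⟨hWY.trans hY, hcycW⟩, ?_⟩
    rw [hclW, hcycW]
  · rintro ⟨Z, hZ, rfl⟩
    exact hZ.isFlat.isCyclicFlat_restrict_cyc_inter hY
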